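/- Define for t ≥ 1 and p ∈ (0,1): c_p(t) = (t^p − 1)/(p(p−1)) − (t−1)/(p−1) and l_p(t) = (1/2)((t^p − 1)/p − (t^{p−1} − 1)/(p−1)). Then c_p(t) ≤ l_p(t) + (t−1)²/4. -/

import Mathlib

/-!
Let `g := l_p + (t - 1)² / 4 - c_p`. Then `g 1 = 0` and
`g' t = (t - 1) (t ^ (p - 2) + 1) / 2 - ∫₁ᵗ y ^ (p - 2) dy`, which is nonnegative by the right
Hermite–Hadamard inequality for the convex function `y ↦ y ^ (p - 2)`. So `g` is monotone on
`[1, ∞)`.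
-/

open Set

theorem monotoneOn_of_hasDerivAt_nonneg {D : Set ℝ} (hD : Convex ℝ D) {f f' : ℝ → ℝ}
    (hf : ∀ x ∈ D, HasDerivAt f (f' x) x) (hf'₀ : ∀ x ∈ interior D, 0 ≤ f' x) :
    MonotoneOn f D :=
  monotoneOn_of_hasDerivWithinAt_nonneg hD
    (fun x hx ↦ (hf x hx).continuousAt.continuousWithinAt)
    (fun x hx ↦ (hf x (interior_subset hx)).hasDerivWithinAt) hf'₀

theorem convexOn_rpow_of_nonpos {q : ℝ} (hq : q ≤ 0) :
    ConvexOn ℝ (Ioi 0) fun x : ℝ ↦ x ^ q := by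
  have hderiv (r : ℝ) (x : ℝ) (hx : x ∈ Ioi (0 : ℝ)) :
      HasDerivWithinAt (fun x : ℝ ↦ x ^ r) (r * x ^ (r - 1)) (interior (Ioi 0)) x :=
    (Real.hasDerivAt_rpow_const (Or.inl (ne_of_gt hx))).hasDerivWithinAt
  refine convexOn_of_hasDerivWithinAt2_nonneg (convex_Ioi 0)
    (fun x hx ↦ (Real.continuousAt_rpow_const x q (Or.inl (ne_of_gt hx))).continuousWithinAt)
    (f'' := fun x ↦ q * ((q - 1) * x ^ (q - 1 - 1)))
    (fun x hx ↦ hderiv q x (interior_subset hx))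
    (fun x hx ↦ (hderiv (q - 1) x (interior_subset hx)).const_mul q) fun x hx ↦ ?_
  have : 0 < x ^ (q - 1 - 1) := Real.rpow_pos_of_pos (interior_subset hx) _
  exact mul_nonneg_of_nonpos_of_nonpos hq (mul_nonpos_of_nonpos_of_nonneg (by linarith) this.le)

/-- The right Hermite–Hadamard inequality, for a differentiable convex integrand `f` given through
an antiderivative `F`. -/
theorem ConvexOn.sub_le_mul_add_div_two {f f' F : ℝ → ℝ} {a b : ℝ} (hab : a ≤ b)
    (hf : ConvexOn ℝ (Icc a b) f) (hf' : ∀ x ∈ Icc a b, HasDerivAt f (f' x) x)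
    (hF : ∀ x ∈ Icc a b, HasDerivAt F (f x) x) :
    F b - F a ≤ (b - a) * (f a + f b) / 2 := by
  let G : ℝ → ℝ := fun x ↦ (x - a) * (f a + f x) / 2 - (F x - F a)
  have hG : ∀ x ∈ Icc a b,
      HasDerivAt G ((1 * (f a + f x) + (x - a) * f' x) / 2 - f x) x := fun x hx ↦
    ((((hasDerivAt_id' x).sub_const a).mul ((hf' x hx).const_add (f a))).div_const 2).sub
      ((hF x hx).sub_const (F a))
  -- the tangent at `x` lies below the chord from `a`, i.e. `slope f a x ≤ f' x`
  have hG' : ∀ x ∈ interior (Icc a b),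
      0 ≤ (1 * (f a + f x) + (x - a) * f' x) / 2 - f x := fun x hx ↦ by
    rw [interior_Icc] at hx
    have hslope := hf.slope_le_of_hasDerivAt (left_mem_Icc.2 hab) (Ioo_subset_Icc_self hx) hx.1
      (hf' x (Ioo_subset_Icc_self hx))
    rw [slope_def_field, div_le_iff₀ (sub_pos.2 hx.1)] at hslope
    linarith
  have := monotoneOn_of_hasDerivAt_nonneg (convex_Icc a b) hG hG' (left_mem_Icc.2 hab)
    (right_mem_Icc.2 hab) hab
  simp only [G, sub_self, zero_mul, zero_div] at this
  linarith

theorem rpow_sub_one_div_le {q x : ℝ} (hq₀ : q ≠ 0) (hq₁ : q ≤ 1) (hx : 1 ≤ x) :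
    (x ^ q - 1) / q ≤ (x - 1) * (x ^ (q - 1) + 1) / 2 := by
  have hpos : Icc 1 x ⊆ Ioi 0 := fun y hy ↦ lt_of_lt_of_le one_pos hy.1
  have hF : ∀ y ∈ Icc 1 x, HasDerivAt (fun y : ℝ ↦ y ^ q / q) (y ^ (q - 1)) y :=
    fun y hy ↦ by
      simpa [hq₀] using (Real.hasDerivAt_rpow_const (p := q) (Or.inl (hpos hy).ne')).div_const q
  have hconv := (convexOn_rpow_of_nonpos (q := q - 1) (by linarith)).subset hpos (convex_Icc 1 x)
  have := hconv.sub_le_mul_add_div_two hx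
    (fun y hy ↦ Real.hasDerivAt_rpow_const (Or.inl (hpos hy).ne')) hF
  simpa [sub_div, add_comm] using this

theorem hasDerivAt_gap {p t : ℝ} (hp₀ : p ≠ 0) (hp₁ : p ≠ 1) (ht : 0 < t) :
    HasDerivAt (fun t : ℝ ↦ (1 / 2) * ((t ^ p - 1) / p - (t ^ (p - 1) - 1) / (p - 1))
        + (t - 1) ^ 2 / 4 - ((t ^ p - 1) / (p * (p - 1)) - (t - 1) / (p - 1)))
      ((t - 1) * (t ^ (p - 1 - 1) + 1) / 2 - (t ^ (p - 1) - 1) / (p - 1)) t := by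
  have hpow (r : ℝ) : HasDerivAt (fun t : ℝ ↦ t ^ r - 1) (r * t ^ (r - 1)) t :=
    (Real.hasDerivAt_rpow_const (Or.inl ht.ne')).sub_const 1
  have hlin : HasDerivAt (fun t : ℝ ↦ t - 1) 1 t := (hasDerivAt_id' t).sub_const 1
  refine (((((hpow p).div_const p).sub ((hpow (p - 1)).div_const (p - 1))).const_mul (1 / 2)).add
    ((hlin.pow 2).div_const 4) |>.sub (((hpow p).div_const (p * (p - 1))).sub
      (hlin.div_const (p - 1)))).congr_deriv ?_
  have hsplit : t ^ (p - 1) = t ^ (p - 1 - 1) * t := by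
    rw [← Real.rpow_add_one ht.ne']; ring_nf
  have : p - 1 ≠ 0 := sub_ne_zero.2 hp₁
  rw [hsplit]
  field_simp
  ring

theorem stmt_6 (t p : ℝ) (ht : 1 ≤ t) (hp0 : 0 < p) (hp1 : p < 1) :
    (t ^ p - 1) / (p * (p - 1)) - (t - 1) / (p - 1) ≤
    (1 / 2) * ((t ^ p - 1) / p - (t ^ (p - 1) - 1) / (p - 1)) + (t - 1) ^ 2 / 4 := by
  have hmono := monotoneOn_of_hasDerivAt_nonneg (convex_Ici 1)
    (fun s hs ↦ hasDerivAt_gap hp0.ne' hp1.ne (lt_of_lt_of_le one_pos hs))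
    (fun s hs ↦ sub_nonneg.2 <|
      rpow_sub_one_div_le (sub_ne_zero.2 hp1.ne) (by linarith) (interior_subset hs))
  have := hmono self_mem_Ici ht ht
  norm_num at this
  linarith
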